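/- arXiv:math/0603509 — 2 statements merged into one kernel-verified Lean document; each statement's English description precedes it below -/
import Mathlib

section
/- If f : Y → X is a finite surjective morphism of smooth projective varieties and 𝔈 is a Higgs bundle on X, then 𝔈 is H-ample (respectively H-nef) if and only if f*𝔈 is H-ample (respectively H-nef). -/
/-- An abstract theory of Higgs bundles (on the varieties in play, together with all
the Higgs Grassmannians), as needed to formulate the recursive notions of
Higgs-ampleness and Higgs-numerical effectiveness of Bruzzo–Graña Otero. -/
structure HiggsTheory where
  /-- Higgs bundles -/
  HB : Type
  /-- rank of the underlying vector bundle -/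
  rank : HB → ℕ
  rank_pos : ∀ E, 0 < rank E
  /-- dual Higgs bundle -/
  dual : HB → HB
  /-- the determinant line bundle det E is ample -/
  detAmple : HB → Prop
  /-- the determinant line bundle det E is nef -/
  detNef : HB → Prop
  /-- for rank-one Higgs bundles: the underlying line bundle is ample -/
  lineAmple : HB → Prop
  /-- for rank-one Higgs bundles: the underlying line bundle is nef -/
  lineNef : HB → Prop
  /-- `UnivQuot E Q`: `Q` is a universal Higgs quotient bundle `Q_{s,E}` of `E` on one of
  the Higgs Grassmannians `HGr_s(E)`, `0 < s < rank E` -/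
  UnivQuot : HB → HB → Prop
  quot_rank_lt : ∀ E Q, UnivQuot E Q → rank Q < rank E

/-- Higgs-ampleness, defined recursively on the rank. -/
def HiggsTheory.HAmple (T : HiggsTheory) (E : T.HB) : Prop :=
  if T.rank E = 1 then T.lineAmple E
  else T.detAmple E ∧ ∀ Q, T.UnivQuot E Q → T.HAmple Q
termination_by T.rank E
decreasing_by exact T.quot_rank_lt _ _ ‹_›

/-- Higgs-numerical effectiveness (H-nefness), defined recursively on the rank. -/
def HiggsTheory.HNef (T : HiggsTheory) (E : T.HB) : Prop :=
  if T.rank E = 1 then T.lineNef E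
  else T.detNef E ∧ ∀ Q, T.UnivQuot E Q → T.HNef Q
termination_by T.rank E
decreasing_by exact T.quot_rank_lt _ _ ‹_›

/-- Higgs-numerical flatness: both `E` and its dual are H-nef. -/
def HiggsTheory.HNflat (T : HiggsTheory) (E : T.HB) : Prop :=
  T.HNef E ∧ T.HNef (T.dual E)

/-! Both notions have the same recursive shape: a rank-one condition, a determinant condition, and
the same notion for every universal Higgs quotient. Pullback preserves the rank and the first two
conditions, and matches the universal quotients of `f*𝔈` with the pullbacks of those of `𝔈`
(this is `f̄*Q_{s,𝔈} ≅ Q_{s,f*𝔈}`), so strong induction on the rank transfers the notion. -/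

namespace HiggsTheory

variable {T : HiggsTheory} {pull : T.HB → T.HB}

theorem forall_univQuot_iff_forall_univQuot_pull
    (hquot : ∀ E Q, T.UnivQuot E Q → T.UnivQuot (pull E) (pull Q))
    (hquot' : ∀ E Q', T.UnivQuot (pull E) Q' → ∃ Q, T.UnivQuot E Q ∧ Q' = pull Q)
    {P : T.HB → Prop} {E : T.HB} (hP : ∀ Q, T.UnivQuot E Q → (P Q ↔ P (pull Q))) :
    (∀ Q, T.UnivQuot E Q → P Q) ↔ ∀ Q', T.UnivQuot (pull E) Q' → P Q' := by
  constructor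
  · intro h Q' hQ'
    obtain ⟨Q, hQ, rfl⟩ := hquot' E Q' hQ'
    exact (hP Q hQ).1 (h Q hQ)
  · exact fun h Q hQ => (hP Q hQ).2 (h _ (hquot E Q hQ))

theorem iff_pull_of_recursive
    (pull_rank : ∀ E, T.rank (pull E) = T.rank E)
    (hquot : ∀ E Q, T.UnivQuot E Q → T.UnivQuot (pull E) (pull Q))
    (hquot' : ∀ E Q', T.UnivQuot (pull E) Q' → ∃ Q, T.UnivQuot E Q ∧ Q' = pull Q)
    {P line det : T.HB → Prop}
    (hP : ∀ E, P E ↔ if T.rank E = 1 then line E else det E ∧ ∀ Q, T.UnivQuot E Q → P Q)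
    (hline : ∀ E, T.rank E = 1 → (line E ↔ line (pull E)))
    (hdet : ∀ E, det E ↔ det (pull E)) (E : T.HB) :
    P E ↔ P (pull E) := by
  induction hn : T.rank E using Nat.strong_induction_on generalizing E with
  | _ n ih =>
  have hquots : ∀ Q, T.UnivQuot E Q → (P Q ↔ P (pull Q)) := fun Q hQ =>
    ih _ (hn ▸ T.quot_rank_lt E Q hQ) Q rfl
  rw [hP E, hP (pull E), pull_rank]
  split_ifs with h1
  · exact hline E h1
  · exact and_congr (hdet E) (forall_univQuot_iff_forall_univQuot_pull hquot hquot' hquots)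

end HiggsTheory

/-- If `f : Y → X` is a finite surjective morphism of smooth projective
varieties and `𝔈` is a Higgs bundle on `X`, then `𝔈` is H-ample (resp. H-nef) if and only
if `f*𝔈` is H-ample (resp. H-nef).
`pull` denotes pullback along the finite surjective morphism `f` (and along the induced
finite surjective morphisms `f̄ : HGr_s(f*𝔈) → HGr_s(𝔈)` on Higgs Grassmannians).
Context facts: pullback preserves rank; a line bundle is ample (nef) iff its pullback
along a finite surjective morphism is (`hline_*`); `det(f*E) ≅ f*(det E)` gives
`hdet_*`; and `Q_{s,f*𝔈} ≅ f̄*(Q_{s,𝔈})` gives `hquot`, `hquot'`. -/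
theorem pullback_finite_surjective_hample_hnef_iff (T : HiggsTheory)
    (pull : T.HB → T.HB)
    (pull_rank : ∀ E, T.rank (pull E) = T.rank E)
    (hline_ample : ∀ E, T.rank E = 1 → (T.lineAmple E ↔ T.lineAmple (pull E)))
    (hline_nef : ∀ E, T.rank E = 1 → (T.lineNef E ↔ T.lineNef (pull E)))
    (hdet_ample : ∀ E, T.detAmple E ↔ T.detAmple (pull E))
    (hdet_nef : ∀ E, T.detNef E ↔ T.detNef (pull E))
    (hquot : ∀ E Q, T.UnivQuot E Q → T.UnivQuot (pull E) (pull Q))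
    (hquot' : ∀ E Q', T.UnivQuot (pull E) Q' → ∃ Q, T.UnivQuot E Q ∧ Q' = pull Q)
    (E : T.HB) :
    (T.HAmple E ↔ T.HAmple (pull E)) ∧ (T.HNef E ↔ T.HNef (pull E)) := by
  exact ⟨HiggsTheory.iff_pull_of_recursive pull_rank hquot hquot'
      (fun E => Iff.of_eq (HiggsTheory.HAmple.eq_def T E)) hline_ample hdet_ample E,
    HiggsTheory.iff_pull_of_recursive pull_rank hquot hquot'
      (fun E => Iff.of_eq (HiggsTheory.HNef.eq_def T E)) hline_nef hdet_nef E⟩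
end

section
/- Every quotient Higgs bundle of an H-nef Higgs bundle is H-nef. -/
namespace HiggsTheory

variable {T : HiggsTheory} {E Q : T.HB}

theorem one_lt_rank_of_univQuot (hQ : T.UnivQuot E Q) : 1 < T.rank E :=
  lt_of_le_of_lt (T.rank_pos Q) (T.quot_rank_lt E Q hQ)

theorem HNef.univQuot (hE : T.HNef E) (hQ : T.UnivQuot E Q) : T.HNef Q := by
  rw [HNef, if_neg (one_lt_rank_of_univQuot hQ).ne'] at hE
  exact hE.2 Q hQ

end HiggsTheory

/-- Every quotient Higgs bundle of an H-nef Higgs bundle is H-nef.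
`HiggsQuotientOf F E` means `F` is a (locally free) quotient Higgs bundle of `E`, i.e. a
locally free quotient of `E` with φ-invariant kernel; `PullbackOf F Q` means `F` is the
pullback of `Q` along some morphism.  Context facts: by the universal property of the
Higgs Grassmannian, a proper rank-s Higgs quotient corresponds to a section
`σ : X → HGr_s(𝔈)` with `F ≅ σ*(Q_{s,𝔈})` (`hsec`), and H-nefness is preserved under
pullback along any morphism (`hpull`). -/
theorem quotient_of_hnef_is_hnef (T : HiggsTheory)
    (HiggsQuotientOf : T.HB → T.HB → Prop)
    (PullbackOf : T.HB → T.HB → Prop)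
    (hsec : ∀ E F, HiggsQuotientOf F E →
      (∃ Q, T.UnivQuot E Q ∧ PullbackOf F Q) ∨ F = E)
    (hpull : ∀ Q F, PullbackOf F Q → T.HNef Q → T.HNef F)
    (E F : T.HB) (hE : T.HNef E) (hF : HiggsQuotientOf F E) :
    T.HNef F := by
  rcases hsec E F hF with ⟨Q, hQ, hFQ⟩ | rfl
  · exact hpull Q F hFQ (hE.univQuot hQ)
  · exact hE
end
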